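/- arXiv:2506.17977 — 2 statements merged into one kernel-verified Lean document; each statement's English description precedes it below -/
import Mathlib

section
/- For a monotone submodular set function f with f(∅) = 0 on a finite ground set V, the greedy algorithm that iteratively adds the element with maximum marginal gain produces, after k steps, a set G_k with f(G_k) ≥ (1 − (1 − 1/k)^k)·max_{|S| ≤ k} f(S) ≥ (1 − 1/e)·max_{|S| ≤ k} f(S). -/
/-! Each greedy step closes at least a `1/k`-th of the gap `f S - f (G i)` to any `S` with
`#S ≤ k`: by monotonicity and submodularity the gap is at most `f (S ∪ G i) - f (G i)`, hence at
most the sum of the marginal gains over `G i` of the elements of `S`, each of which is bounded by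
the greedy gain. So the gap after `k` steps is at most `(1 - 1/k)^k f S ≤ e⁻¹ f S`. -/

open Finset

section MarginalGain

variable {V : Type*} [DecidableEq V]

def marginalGain (f : Finset V → ℝ) (S : Finset V) (u : V) : ℝ := f (insert u S) - f S

variable {f : Finset V → ℝ}

lemma marginalGain_nonneg (hmono : Monotone f) (S : Finset V) (u : V) :
    0 ≤ marginalGain f S u :=
  sub_nonneg.2 (hmono (subset_insert u S))

lemma sub_le_sum_marginalGain
    (hsub : ∀ S T : Finset V, ∀ u : V, S ⊆ T → u ∉ T → marginalGain f T u ≤ marginalGain f S u)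
    (D T : Finset V) : f (D ∪ T) - f T ≤ ∑ u ∈ D, marginalGain f T u := by
  induction D using Finset.induction_on with
  | empty => simp
  | @insert a D ha ih =>
    rw [insert_union, sum_insert ha]
    by_cases haT : a ∈ T
    · rw [insert_eq_of_mem (mem_union_right D haT), marginalGain, insert_eq_of_mem haT]
      linarith
    · have hgain : f (insert a (D ∪ T)) - f (D ∪ T) ≤ marginalGain f T a :=
        hsub T (D ∪ T) a subset_union_right (by simp [ha, haT])
      linarith

lemma sub_le_card_mul_marginalGain (hmono : Monotone f)
    (hsub : ∀ S T : Finset V, ∀ u : V, S ⊆ T → u ∉ T → marginalGain f T u ≤ marginalGain f S u)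
    {A : Finset V} {u : V} (hu : ∀ w, marginalGain f A w ≤ marginalGain f A u) (S : Finset V) :
    f S - f A ≤ #S * marginalGain f A u :=
  calc f S - f A ≤ f (S ∪ A) - f A := by linarith [hmono (subset_union_left : S ⊆ S ∪ A)]
    _ ≤ ∑ w ∈ S, marginalGain f A w := sub_le_sum_marginalGain hsub S A
    _ ≤ #S • marginalGain f A u := sum_le_card_nsmul _ _ _ fun w _ => hu w
    _ = #S * marginalGain f A u := nsmul_eq_mul _ _

lemma sub_greedy_step_le (hmono : Monotone f)
    (hsub : ∀ S T : Finset V, ∀ u : V, S ⊆ T → u ∉ T → marginalGain f T u ≤ marginalGain f S u)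
    {k : ℕ} (hk : 0 < k) {S A : Finset V} (hS : #S ≤ k) {u : V}
    (hu : ∀ w, marginalGain f A w ≤ marginalGain f A u) :
    f S - f (insert u A) ≤ (1 - 1 / k) * (f S - f A) := by
  have hgap : f S - f A ≤ k * marginalGain f A u :=
    (sub_le_card_mul_marginalGain hmono hsub hu S).trans
      (mul_le_mul_of_nonneg_right (by exact_mod_cast hS) (marginalGain_nonneg hmono A u))
  have hfrac : (f S - f A) / k ≤ marginalGain f A u :=
    (div_le_iff₀' (Nat.cast_pos.2 hk)).2 hgap
  calc f S - f (insert u A) = (f S - f A) - marginalGain f A u := by rw [marginalGain]; ring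
    _ ≤ (f S - f A) - (f S - f A) / k := by linarith
    _ = (1 - 1 / k) * (f S - f A) := by ring

end MarginalGain

theorem greedy_submodular_approximation_general {V : Type*} [DecidableEq V]
    (f : Finset V → ℝ)
    (hempty : f ∅ = 0)
    (hmono : ∀ S T : Finset V, S ⊆ T → f S ≤ f T)
    (hsub : ∀ S T : Finset V, ∀ u : V, S ⊆ T → u ∉ T →
      f (insert u T) - f T ≤ f (insert u S) - f S)
    (k : ℕ) (hk : 0 < k)
    (G : ℕ → Finset V) (hG0 : G 0 = ∅)
    (hstep : ∀ i < k, ∃ u : V,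
      G (i + 1) = insert u (G i) ∧
      ∀ w : V, f (insert w (G i)) - f (G i) ≤ f (insert u (G i)) - f (G i)) :
    ∀ S : Finset V, S.card ≤ k →
      (1 - 1 / Real.exp 1) * f S ≤ (1 - (1 - 1 / (k : ℝ)) ^ k) * f S ∧
      (1 - (1 - 1 / (k : ℝ)) ^ k) * f S ≤ f (G k) := by
  intro S hS
  have hk1 : (1 : ℝ) ≤ k := Nat.one_le_cast.2 hk
  have hgap : f S - f (G k) ≤ (1 - 1 / k) ^ k * (f S - f (G 0)) := by
    refine le_geom (u := fun i => f S - f (G i)) (sub_nonneg.2 (div_le_one_of_le₀ hk1 k.cast_nonneg))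
      k fun i hi => ?_
    obtain ⟨u, hGu, hu⟩ := hstep i hi
    rw [hGu]
    exact sub_greedy_step_le (fun S T => hmono S T) hsub hk hS hu
  rw [hG0, hempty, sub_zero] at hgap
  have hfS : 0 ≤ f S := hempty ▸ hmono ∅ S (empty_subset S)
  have hexp : (1 - 1 / (k : ℝ)) ^ k ≤ 1 / Real.exp 1 := by
    simpa only [Real.exp_neg, one_div] using Real.one_sub_div_pow_le_exp_neg (t := 1) hk1
  exact ⟨mul_le_mul_of_nonneg_right (by linarith) hfS, by linarith⟩

/-- Greedy `(1 - 1/e)`-approximation for monotone submodular maximization: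
after `k` greedy steps, `f(G_k) ≥ (1 - (1 - 1/k)^k)·OPT ≥ (1 - 1/e)·OPT`. -/
theorem greedy_submodular_approximation {V : Type*} [Fintype V] [DecidableEq V]
    (f : Finset V → ℝ)
    (hnn : ∀ S : Finset V, 0 ≤ f S)
    (hempty : f ∅ = 0)
    (hmono : ∀ S T : Finset V, S ⊆ T → f S ≤ f T)
    (hsub : ∀ S T : Finset V, ∀ u : V, S ⊆ T → u ∉ T →
      f (insert u T) - f T ≤ f (insert u S) - f S)
    (k : ℕ) (hk : 0 < k)
    (G : ℕ → Finset V) (hG0 : G 0 = ∅)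
    (hstep : ∀ i < k, ∃ u : V,
      G (i + 1) = insert u (G i) ∧
      ∀ w : V, f (insert w (G i)) - f (G i) ≤ f (insert u (G i)) - f (G i)) :
    ∀ S : Finset V, S.card ≤ k →
      (1 - 1 / Real.exp 1) * f S ≤ (1 - (1 - 1 / (k : ℝ)) ^ k) * f S ∧
      (1 - (1 - 1 / (k : ℝ)) ^ k) * f S ≤ f (G k) :=
  greedy_submodular_approximation_general f hempty hmono hsub k hk G hG0 hstep
end

section
/- For the Max-Sum Dispersion objective h(S) = Σ_{{u,v} ⊆ S} w(u,v) with nonnegative symmetric weights w satisfying the triangle inequality, the greedy algorithm that repeatedly picks a pair of remaining elements maximizing w and adds both achieves h(G) ≥ (1/2)·max_{|S| = k} h(S) when k is even. -/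
/-- Max-Sum Dispersion: the sum of the weights over all unordered pairs in `S`
(for a symmetric weight function, half the sum over ordered distinct pairs). -/
noncomputable def dispersion {V : Type} [DecidableEq V] (w : V → V → ℝ)
    (S : Finset V) : ℝ :=
  (∑ u ∈ S, ∑ v ∈ S \ {u}, w u v) / 2

/-!
Peel off the first greedy pair `{u, v}`; its weight `a` is maximal among pairs avoiding the
elements chosen before it. If `s` elements remain to be chosen, the triangle inequality
`a ≤ w u x + w v x` makes the pair contribute at least `(s - 1) * a` to the greedy value, counting
its pairs with the `s - 2` elements chosen later. On the other side, removing two elements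
(`u` and `v` where present) from a competing `s`-set disjoint from the earlier choices loses
`2 s - 3` pairs, each of weight at most `a`. Since `2 s - 3 ≤ 2 (s - 1)`, induction on the number
of rounds gives `h(S) ≤ 2 h(G)`.
-/

open Finset

section

variable {V : Type} [DecidableEq V]

def IsGreedyStep (w : V → V → ℝ) (A B : Finset V) : Prop :=
  ∃ u v : V, u ≠ v ∧ u ∉ A ∧ v ∉ A ∧ B = insert u (insert v A) ∧
    ∀ x y : V, x ∉ A → y ∉ A → x ≠ y → w x y ≤ w u v

def IsGreedyRun (w : V → V → ℝ) (G : ℕ → Finset V) (n : ℕ) : Prop :=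
  ∀ i < n, IsGreedyStep w (G i) (G (i + 1))

variable {w : V → V → ℝ}

theorem dispersion_insert (hsymm : ∀ u v, w u v = w v u) {a : V} {S : Finset V} (ha : a ∉ S) :
    dispersion w (insert a S) = dispersion w S + ∑ x ∈ S, w a x := by
  have hrow : ∀ x ∈ S, ∑ y ∈ insert a S \ {x}, w x y = w a x + ∑ y ∈ S \ {x}, w x y := by
    intro x hx
    have hax : a ∉ ({x} : Finset V) := mem_singleton.not.2 (ne_of_mem_of_not_mem hx ha).symm
    rw [insert_sdiff_of_notMem _ hax, sum_insert fun h => ha (mem_sdiff.1 h).1, hsymm x a]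
  unfold dispersion
  rw [sum_insert ha, insert_sdiff_of_mem _ (mem_singleton_self a), sdiff_singleton_eq_erase,
    erase_eq_of_notMem ha, sum_congr rfl hrow, sum_add_distrib]
  ring

theorem dispersion_insert_insert (hsymm : ∀ u v, w u v = w v u) {u v : V} {S : Finset V}
    (huv : u ≠ v) (hu : u ∉ S) (hv : v ∉ S) :
    dispersion w (insert u (insert v S)) = dispersion w S + w u v + ∑ x ∈ S, (w u x + w v x) := by
  rw [dispersion_insert hsymm (by simp [huv, hu]), dispersion_insert hsymm hv, sum_insert hv,
    sum_add_distrib]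
  ring

theorem dispersion_add_le_dispersion_insert_insert (hsymm : ∀ u v, w u v = w v u)
    (htri : ∀ u v x, w u v ≤ w u x + w x v) {u v : V} {S : Finset V}
    (huv : u ≠ v) (hu : u ∉ S) (hv : v ∉ S) :
    dispersion w S + (#S + 1) * w u v ≤ dispersion w (insert u (insert v S)) := by
  have hcross : ∑ _x ∈ S, w u v ≤ ∑ x ∈ S, (w u x + w v x) :=
    sum_le_sum fun x _ => (htri u v x).trans_eq (by rw [hsymm x v])
  rw [sum_const, nsmul_eq_mul] at hcross
  rw [dispersion_insert_insert hsymm huv hu hv]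
  linarith

theorem exists_subset_sdiff_pair_dispersion_le (hsymm : ∀ u v, w u v = w v u) (u v : V)
    {S : Finset V} {c : ℝ} (hS : 2 ≤ #S) (hc : ∀ x ∈ S, ∀ y ∈ S, x ≠ y → w x y ≤ c) :
    ∃ T ⊆ S \ {u, v}, #T + 2 = #S ∧ dispersion w S ≤ dispersion w T + (2 * #T + 1) * c := by
  obtain ⟨T, hTuv, hTcard⟩ := exists_subset_card_eq (s := S \ {u, v}) (n := #S - 2) (by
    have := le_card_sdiff {u, v} S
    have := card_le_two (a := u) (b := v)
    omega)
  have hTS : T ⊆ S := hTuv.trans sdiff_subset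
  obtain ⟨d₁, d₂, hd, hSdiff⟩ := card_eq_two.1 (show #(S \ T) = 2 by
    rw [card_sdiff_of_subset hTS]; omega)
  have hd₁ : d₁ ∈ S \ T := by simp [hSdiff]
  have hd₂ : d₂ ∈ S \ T := by simp [hSdiff]
  have hSeq : S = insert d₁ (insert d₂ T) := by
    rw [← sdiff_union_of_subset hTS, hSdiff, insert_union, singleton_union]
  refine ⟨T, hTuv, by omega, ?_⟩
  have hdd : w d₁ d₂ ≤ c := hc _ (mem_sdiff.1 hd₁).1 _ (mem_sdiff.1 hd₂).1 hd
  have hcross : ∑ x ∈ T, (w d₁ x + w d₂ x) ≤ ∑ _x ∈ T, 2 * c := by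
    refine sum_le_sum fun x hx => ?_
    have h₁ := hc _ (mem_sdiff.1 hd₁).1 _ (hTS hx) fun h => (mem_sdiff.1 hd₁).2 (h ▸ hx)
    have h₂ := hc _ (mem_sdiff.1 hd₂).1 _ (hTS hx) fun h => (mem_sdiff.1 hd₂).2 (h ▸ hx)
    linarith
  rw [sum_const, nsmul_eq_mul] at hcross
  rw [hSeq, dispersion_insert_insert hsymm hd (mem_sdiff.1 hd₁).2
    (by simpa [hd] using (mem_sdiff.1 hd₂).2)]
  linarith

theorem IsGreedyStep.subset {A B : Finset V} (h : IsGreedyStep w A B) : A ⊆ B := by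
  obtain ⟨u, v, -, -, -, rfl, -⟩ := h
  exact (subset_insert v A).trans (subset_insert u _)

theorem IsGreedyStep.card_eq {A B : Finset V} (h : IsGreedyStep w A B) : #B = #A + 2 := by
  obtain ⟨u, v, huv, hu, hv, rfl, -⟩ := h
  rw [card_insert_of_notMem (by simp [huv, hu]), card_insert_of_notMem hv]

theorem IsGreedyRun.tail {G : ℕ → Finset V} {n : ℕ} (h : IsGreedyRun w G (n + 1)) :
    IsGreedyRun w (fun i => G (i + 1)) n :=
  fun i hi => h (i + 1) (by omega)

theorem IsGreedyRun.subset_and_card {G : ℕ → Finset V} {n : ℕ} (h : IsGreedyRun w G n) :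
    G 0 ⊆ G n ∧ #(G n) = #(G 0) + 2 * n := by
  induction n with
  | zero => simp
  | succ n ih =>
    obtain ⟨h0, hcard⟩ := ih fun i hi => h i (by omega)
    exact ⟨h0.trans (h n (by omega)).subset, by rw [(h n (by omega)).card_eq, hcard]; ring⟩

theorem IsGreedyRun.card_sdiff {G : ℕ → Finset V} {n : ℕ} (h : IsGreedyRun w G n) :
    #(G n \ G 0) = 2 * n := by
  obtain ⟨h0, hcard⟩ := h.subset_and_card
  rw [card_sdiff_of_subset h0]
  omega

theorem IsGreedyRun.dispersion_le (hnn : ∀ u v, 0 ≤ w u v) (hsymm : ∀ u v, w u v = w v u)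
    (htri : ∀ u v x, w u v ≤ w u x + w x v) {n : ℕ} {G : ℕ → Finset V}
    (hG : IsGreedyRun w G n) {S : Finset V} (hSG : Disjoint S (G 0)) (hS : #S = 2 * n) :
    dispersion w S ≤ 2 * dispersion w (G n \ G 0) := by
  induction n generalizing G S with
  | zero => simp_all [dispersion]
  | succ n ih =>
    obtain ⟨u, v, huv, hu, hv, hG1, hmax⟩ := hG 0 (by omega)
    obtain ⟨T, hTuv, hT, hST⟩ := exists_subset_sdiff_pair_dispersion_le hsymm u v (by omega)
      fun x hx y hy => hmax x y (disjoint_left.1 hSG hx) (disjoint_left.1 hSG hy)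
    have hTG : Disjoint T (G 1) := by
      rw [hG1]
      refine disjoint_left.2 fun x hx => ?_
      have hx' := hTuv hx
      simp only [mem_sdiff, mem_insert, mem_singleton, not_or] at hx' ⊢
      exact ⟨hx'.2.1, hx'.2.2, disjoint_left.1 hSG hx'.1⟩
    have hG1n : G 1 ⊆ G (n + 1) := hG.tail.subset_and_card.1
    set H := G (n + 1) \ G 1
    have huvH : u ∉ H ∧ v ∉ H := by simp [H, hG1]
    have hH : G (n + 1) \ G 0 = insert u (insert v H) := by
      ext x
      have hx := @hG1n x
      simp only [H, hG1, mem_sdiff, mem_insert] at hx ⊢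
      grind
    have hTH : #T = #H := by rw [hG.tail.card_sdiff]; omega
    rw [hH]
    calc dispersion w S ≤ dispersion w T + (2 * #H + 1) * w u v := hTH ▸ hST
      _ ≤ 2 * (dispersion w H + (#H + 1) * w u v) := by
        linarith [ih hG.tail hTG (by omega), hnn u v]
      _ ≤ 2 * dispersion w (insert u (insert v H)) := by
        linarith [dispersion_add_le_dispersion_insert_insert hsymm htri huv huvH.1 huvH.2]

end

theorem greedy_dispersion_half_approx_general {V : Type} [DecidableEq V]
    (w : V → V → ℝ)
    (hnn : ∀ u v : V, 0 ≤ w u v)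
    (hsymm : ∀ u v : V, w u v = w v u)
    (htri : ∀ u v x : V, w u v ≤ w u x + w x v)
    (k : ℕ) (hkeven : Even k)
    (G : ℕ → Finset V) (hG0 : G 0 = ∅)
    (hstep : ∀ i < k / 2, ∃ u v : V, u ≠ v ∧ u ∉ G i ∧ v ∉ G i ∧
      G (i + 1) = insert u (insert v (G i)) ∧
      ∀ x y : V, x ∉ G i → y ∉ G i → x ≠ y → w x y ≤ w u v) :
    ∀ S : Finset V, S.card = k →
      (1 / 2) * dispersion w S ≤ dispersion w (G (k / 2)) := by
  intro S hS
  have hrun : IsGreedyRun w G (k / 2) := hstep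
  have h := hrun.dispersion_le hnn hsymm htri (S := S) (by simp [hG0])
    (by rw [hS, Nat.two_mul_div_two_of_even hkeven])
  rw [hG0, sdiff_empty] at h
  linarith

/-- The greedy pair-selection algorithm for Max-Sum Dispersion with metric
weights achieves a `1/2`-approximation when `k` is even. -/
theorem greedy_dispersion_half_approx {V : Type} [Fintype V] [DecidableEq V]
    (w : V → V → ℝ)
    (hnn : ∀ u v : V, 0 ≤ w u v)
    (hsymm : ∀ u v : V, w u v = w v u)
    (htri : ∀ u v x : V, w u v ≤ w u x + w x v)
    (k : ℕ) (hk : 0 < k) (hkeven : Even k)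
    (G : ℕ → Finset V) (hG0 : G 0 = ∅)
    (hstep : ∀ i < k / 2, ∃ u v : V, u ≠ v ∧ u ∉ G i ∧ v ∉ G i ∧
      G (i + 1) = insert u (insert v (G i)) ∧
      ∀ x y : V, x ∉ G i → y ∉ G i → x ≠ y → w x y ≤ w u v) :
    ∀ S : Finset V, S.card = k →
      (1 / 2) * dispersion w S ≤ dispersion w (G (k / 2)) :=
  greedy_dispersion_half_approx_general w hnn hsymm htri k hkeven G hG0 hstep
end
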